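/- arXiv:2005.12576 — 3 statements merged into one kernel-verified Lean document; each statement's English description precedes it below -/
import Mathlib

section
/- Let f : (0,∞) → (0,∞) be increasing with inverse f⁻¹, and suppose y : [0,∞) → [0,∞) is a C¹ function satisfying y'(t) ≤ -c·f⁻¹(y(t)) for a constant c > 0, where f(s) = A s^{(p-1)/(p+1)} + B s for constants A,B > 0 and p > 1. Then there is a constant C (depending on y(0), A, B, c, p) such that y(t) ≤ C (1+t)^{-(p-1)/2} for all t ≥ 0. -/
open Set

/-- ODE comparison lemma yielding polynomial decay. -/
theorem stmt5 (p A B c : ℝ) (hp : 1 < p) (hA : 0 < A) (hB : 0 < B) (hc : 0 < c)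
    (f finv : ℝ → ℝ)
    (hf : ∀ s, f s = A * s ^ ((p - 1) / (p + 1)) + B * s)
    (hfinc : StrictMonoOn f (Ici 0))
    (hinv1 : ∀ s ≥ (0:ℝ), finv (f s) = s) (hinv2 : ∀ s ≥ (0:ℝ), f (finv s) = s)
    (y : ℝ → ℝ) (hynn : ∀ t ≥ (0:ℝ), 0 ≤ y t)
    (hyd : ∀ t ≥ (0:ℝ), HasDerivAt y (deriv y t) t)
    (hode : ∀ t ≥ (0:ℝ), deriv y t ≤ -c * finv (y t)) :
    ∃ C : ℝ, ∀ t ≥ (0:ℝ), y t ≤ C * (1 + t) ^ (-(p - 1) / 2) := by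
  have hp1 : (0:ℝ) < p - 1 := by linarith
  have hp1' : (0:ℝ) < p + 1 := by linarith
  set α : ℝ := (p - 1) / (p + 1) with hαdef
  have hα0 : 0 < α := div_pos hp1 hp1'
  have hα1 : α < 1 := by
    rw [hαdef, div_lt_one hp1']; linarith
  set q : ℝ := (p + 1) / (p - 1) with hqdef
  have hq1 : 1 < q := by
    rw [hqdef, lt_div_iff₀ hp1]; linarith
  have hq0 : 0 < q := by linarith
  have hαq : α * q = 1 := by
    rw [hαdef, hqdef]; field_simp
  set β : ℝ := (p - 1) / 2 with hβdef
  have hβ0 : 0 < β := by positivity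
  have hβq : β * q = β + 1 := by
    rw [hβdef, hqdef]; field_simp; ring
  -- f 0 = 0
  have hf0 : f 0 = 0 := by
    rw [hf 0, Real.zero_rpow hα0.ne']; ring
  -- continuity of f
  have hfcont : Continuous f := by
    have : f = fun s => A * s ^ α + B * s := funext hf
    rw [this]
    refine Continuous.add (Continuous.mul continuous_const ?_) (continuous_const.mul continuous_id)
    exact continuous_iff_continuousAt.mpr fun x =>
      Real.continuousAt_rpow_const x α (Or.inr hα0.le)
  -- finv is nonneg on nonnegatives
  have hfinv_nonneg : ∀ u ≥ (0:ℝ), 0 ≤ finv u := by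
    intro u hu
    have hub : 0 ≤ u / B := div_nonneg hu hB.le
    have hfu : u ≤ f (u / B) := by
      rw [hf]
      have h1 : 0 ≤ A * (u / B) ^ α := by positivity
      have h2 : B * (u / B) = u := by field_simp
      linarith
    have : u ∈ Icc (f 0) (f (u / B)) := ⟨by rw [hf0]; exact hu, hfu⟩
    obtain ⟨s, hs, hfs⟩ := intermediate_value_Icc hub hfcont.continuousOn this
    rw [← hfs, hinv1 s hs.1]; exact hs.1
  -- deriv nonpos
  have hderiv_nonpos : ∀ t ≥ (0:ℝ), deriv y t ≤ 0 := by
    intro t ht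
    have := hode t ht
    have h2 : 0 ≤ finv (y t) := hfinv_nonneg _ (hynn t ht)
    nlinarith
  -- y is bounded by y 0
  have hmono : ∀ t ≥ (0:ℝ), y t ≤ y 0 := by
    intro t ht
    rcases eq_or_lt_of_le ht with h | h
    · rw [← h]
    · have hanti : AntitoneOn y (Ici (0:ℝ)) := by
        refine antitoneOn_of_deriv_nonpos (convex_Ici 0) ?_ ?_ ?_
        · intro x hx; exact (hyd x hx).continuousAt.continuousWithinAt
        · intro x hx
          rw [interior_Ici] at hx
          exact (hyd x (le_of_lt hx)).differentiableAt.differentiableWithinAt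
        · intro x hx
          rw [interior_Ici] at hx
          exact hderiv_nonpos x (le_of_lt hx)
      exact hanti (self_mem_Ici) ht ht
  set M : ℝ := finv (y 0) with hMdef
  have hM0 : 0 ≤ M := hfinv_nonneg _ (hynn 0 le_rfl)
  -- finv (y t) ≤ M
  have hvle : ∀ t ≥ (0:ℝ), finv (y t) ≤ M := by
    intro t ht
    by_contra hlt
    push_neg at hlt
    have := hfinc (mem_Ici.mpr hM0) (mem_Ici.mpr (hfinv_nonneg _ (hynn t ht))) hlt
    rw [hinv2 _ (hynn t ht), hinv2 _ (hynn 0 le_rfl)] at this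
    exact absurd (hmono t ht) (not_le.mpr this)
  set K : ℝ := A + B * (M + 1) ^ (1 - α) with hKdef
  have hK0 : 0 < K := by
    have : 0 < (M + 1) ^ (1 - α) := Real.rpow_pos_of_pos (by linarith) _
    positivity
  -- key differential inequality when y t > 0
  set c' : ℝ := c / K ^ q with hc'def
  have hc'0 : 0 < c' := div_pos hc (Real.rpow_pos_of_pos hK0 _)
  have hkey : ∀ t ≥ (0:ℝ), 0 < y t → deriv y t ≤ -c' * y t ^ q := by
    intro t ht hyt
    set v : ℝ := finv (y t) with hvdef
    have hv0 : 0 ≤ v := hfinv_nonneg _ (hynn t ht)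
    have hfv : f v = y t := hinv2 _ (hynn t ht)
    have hvpos : 0 < v := by
      rcases eq_or_lt_of_le hv0 with h | h
      · exfalso; rw [← h, hf0] at hfv; linarith
      · exact h
    -- y t ≤ K * v ^ α
    have hbound : y t ≤ K * v ^ α := by
      have hva : v = v ^ α * v ^ (1 - α) := by
        rw [← Real.rpow_add hvpos]; norm_num
      have hvM : v ^ (1 - α) ≤ (M + 1) ^ (1 - α) := by
        have h := hvle t ht
        exact Real.rpow_le_rpow hv0 (by linarith) (by linarith)
      have hvα : 0 ≤ v ^ α := Real.rpow_nonneg hv0 _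
      calc y t = A * v ^ α + B * v := by rw [← hfv, hf]
        _ = A * v ^ α + B * (v ^ α * v ^ (1 - α)) := by rw [← hva]
        _ ≤ A * v ^ α + B * (v ^ α * (M + 1) ^ (1 - α)) := by
              nlinarith [mul_le_mul_of_nonneg_left hvM (mul_nonneg hB.le hvα)]
        _ = K * v ^ α := by rw [hKdef]; ring
    -- hence (y t / K) ^ q ≤ v
    have hq2 : (y t / K) ^ q ≤ v := by
      have h1 : y t / K ≤ v ^ α := (div_le_iff₀' hK0).mpr hbound
      have h2 : (y t / K) ^ q ≤ (v ^ α) ^ q :=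
        Real.rpow_le_rpow (by positivity) h1 hq0.le
      rwa [← Real.rpow_mul hv0, hαq, Real.rpow_one] at h2
    have h3 : (y t / K) ^ q = y t ^ q / K ^ q := Real.div_rpow hyt.le hK0.le _
    calc deriv y t ≤ -c * v := hode t ht
      _ ≤ -c * ((y t / K) ^ q) := by nlinarith
      _ = -c' * y t ^ q := by rw [h3, hc'def]; ring
  -- choose the constant
  set D : ℝ := β / c' with hDdef
  have hD0 : 0 ≤ D := le_of_lt (div_pos hβ0 hc'0)
  set C : ℝ := max (y 0) ((D + 1) ^ (q - 1)⁻¹) with hCdef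
  have hC0 : 0 < C :=
    lt_max_of_lt_right (Real.rpow_pos_of_pos (by linarith) _)
  have hCq : D < C ^ (q - 1) := by
    have h1 : (D + 1) ^ (q - 1)⁻¹ ≤ C := le_max_right _ _
    have h2 : ((D + 1) ^ (q - 1)⁻¹) ^ (q - 1) ≤ C ^ (q - 1) :=
      Real.rpow_le_rpow (by positivity) h1 (by linarith)
    rw [Real.rpow_inv_rpow (by linarith) (by linarith : q - 1 ≠ 0)] at h2
    linarith
  refine ⟨C, ?_⟩
  intro t ht
  -- the barrier function
  set Bf : ℝ → ℝ := fun s => C * (1 + s) ^ (-β) with hBfdef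
  set Bf' : ℝ → ℝ := fun s => C * (-β * (1 + s) ^ (-β - 1)) with hBf'def
  have hBfderiv : ∀ s ≥ (0:ℝ), HasDerivAt Bf (Bf' s) s := by
    intro s hs
    have h1s : (0:ℝ) < 1 + s := by linarith
    have h1 : HasDerivAt (fun u : ℝ => 1 + u) 1 s := by
      simpa using (hasDerivAt_id s).const_add 1
    have h2 : HasDerivAt (fun x : ℝ => x ^ (-β)) (-β * (1 + s) ^ (-β - 1)) (1 + s) :=
      Real.hasDerivAt_rpow_const (Or.inl h1s.ne')
    have h3 := (h2.comp s h1).const_mul C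
    simpa [hBfdef, hBf'def, mul_comm] using h3
  have main : y t ≤ Bf t := by
    have := image_le_of_deriv_right_lt_deriv_boundary'
      (f := y) (f' := deriv y) (a := 0) (b := t) (B := Bf) (B' := Bf')
      (fun x hx => (hyd x hx.1).continuousAt.continuousWithinAt)
      (fun x hx => (hyd x hx.1).hasDerivWithinAt)
      ?_ (fun x hx => (hBfderiv x hx.1).continuousAt.continuousWithinAt)
      (fun x hx => (hBfderiv x hx.1).hasDerivWithinAt) ?_
    · exact this (x := t) ⟨ht, le_rfl⟩
    · -- y 0 ≤ Bf 0
      have : Bf 0 = C := by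
        rw [hBfdef]; norm_num
      rw [this]; exact le_max_left _ _
    · -- contact bound
      intro x hx heq
      have hx0 : (0:ℝ) ≤ x := hx.1
      have h1x : (0:ℝ) < 1 + x := by linarith
      have hBpos : 0 < Bf x := by
        have := Real.rpow_pos_of_pos h1x (-β)
        rw [hBfdef]; positivity
      have hypos : 0 < y x := heq ▸ hBpos
      have h1 := hkey x hx0 hypos
      have hP : 0 < (1 + x) ^ (-β - 1) := Real.rpow_pos_of_pos h1x _
      have hBq : y x ^ q = C ^ q * (1 + x) ^ (-β - 1) := by
        rw [heq]
        simp only [hBfdef]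
        rw [Real.mul_rpow hC0.le (Real.rpow_nonneg h1x.le _), ← Real.rpow_mul h1x.le]
        have hexp2 : -β * q = -β - 1 := by linear_combination -hβq
        rw [hexp2]
      have hCq1 : C ^ q = C ^ (q - 1) * C := by
        rw [← Real.rpow_add_one hC0.ne' (q - 1)]
        congr 1
        ring
      have h5 : c' * D = β := by
        rw [hDdef]
        field_simp
      have h4 : β * C < c' * C ^ q := by
        have h6 : c' * C * D < c' * C * C ^ (q - 1) :=
          mul_lt_mul_of_pos_left hCq (mul_pos hc'0 hC0)
        calc β * C = c' * C * D := by rw [mul_comm c' C, mul_assoc, h5]; ring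
          _ < c' * C * C ^ (q - 1) := h6
          _ = c' * C ^ q := by rw [hCq1]; ring
      calc deriv y x ≤ -c' * y x ^ q := h1
        _ = -(c' * C ^ q) * (1 + x) ^ (-β - 1) := by rw [hBq]; ring
        _ < -(β * C) * (1 + x) ^ (-β - 1) :=
            mul_lt_mul_of_pos_right (neg_lt_neg h4) hP
        _ = Bf' x := by show _ = C * (-β * (1 + x) ^ (-β - 1)); ring
  have hexp : -(p - 1) / 2 = -β := by rw [hβdef]; ring
  rw [hexp]
  exact main
end

section
/- Let J be an admissible kernel (nonnegative, even, integrable, non-increasing on (0,∞), with ∫ z²J(z) dz < ∞) and let H(s) = ∫_s^∞ z J(z) dz. Then for every φ ∈ H¹((0,∞)) and every λ > 0, λ² ∫₀^∞ (φ(x) - φ(0))² J(λ x) dx ≤ ∫₀^∞ φ'(x)² H(λ x) dx. Moreover H is non-increasing, bounded, and H(s) → 0 as s → ∞. -/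
open MeasureTheory Set Filter
open scoped ENNReal Topology

/-! By the fundamental theorem of calculus and Cauchy–Schwarz, `(φ x - φ 0)² ≤ x ∫₀ˣ φ'²`.
Integrating this against `J (λ x)` and exchanging the order of integration (Tonelli, in `ℝ≥0∞`,
so that no integrability of the left-hand side is needed in advance) turns the weight of `φ' s ²`
into `∫ₛ^∞ x J (λ x) dx = λ⁻² H (λ s)`. The properties of `H` are those of the tail integral of
`z J z`, which is integrable since `|z| ≤ 1 + z²`. -/

theorem MeasureTheory.Integrable.id_mul_of_sq_mul {f : ℝ → ℝ} (hf : Integrable f)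
    (hf2 : Integrable fun z => z ^ 2 * f z) : Integrable fun z => z * f z := by
  refine (hf.norm.add hf2.norm).mono (aestronglyMeasurable_id.mul hf.1) (ae_of_all _ fun z => ?_)
  have hz : |z| ≤ 1 + z ^ 2 := by nlinarith [abs_nonneg z, sq_abs z]
  simp only [Pi.add_apply, norm_mul, norm_pow, Real.norm_eq_abs, sq_abs]
  rw [abs_of_nonneg (by positivity : (0:ℝ) ≤ |f z| + z ^ 2 * |f z|)]
  nlinarith [abs_nonneg (f z)]

section TailIntegral

variable {E : Type*} [NormedAddCommGroup E] [NormedSpace ℝ E] {u : ℝ → E}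

theorem norm_integral_Ioi_le (hu : Integrable u) (s : ℝ) :
    ‖∫ z in Ioi s, u z‖ ≤ ∫ z, ‖u z‖ :=
  (norm_integral_le_integral_norm _).trans
    (setIntegral_le_integral hu.norm (ae_of_all _ fun _ => norm_nonneg _))

theorem integral_Ioi_eq_sub_intervalIntegral (hu : Integrable u) (a s : ℝ) :
    ∫ z in Ioi s, u z = (∫ z in Ioi a, u z) - ∫ z in a..s, u z :=
  eq_sub_of_add_eq'
    (intervalIntegral.integral_interval_add_Ioi (a := a) (b := s) hu.integrableOn hu.integrableOn)

theorem continuous_integral_Ioi (hu : Integrable u) : Continuous fun s => ∫ z in Ioi s, u z := by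
  refine (continuous_const.sub
    (intervalIntegral.continuous_primitive (fun _ _ => hu.intervalIntegrable) 0)).congr
    fun s => (integral_Ioi_eq_sub_intervalIntegral hu 0 s).symm

theorem tendsto_integral_Ioi_atTop (hu : Integrable u) :
    Tendsto (fun s => ∫ z in Ioi s, u z) atTop (𝓝 0) := by
  have := (tendsto_const_nhds (x := ∫ z in Ioi 0, u z)).sub
    (intervalIntegral_tendsto_integral_Ioi 0 hu.integrableOn tendsto_id)
  rw [sub_self] at this
  exact this.congr fun s => (integral_Ioi_eq_sub_intervalIntegral hu 0 s).symm

end TailIntegral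

theorem antitoneOn_integral_Ioi {u : ℝ → ℝ} (hu : Integrable u) {a : ℝ}
    (hpos : ∀ z, a < z → 0 ≤ u z) : AntitoneOn (fun s => ∫ z in Ioi s, u z) (Ici a) :=
  fun _ hs _ _ hst => setIntegral_mono_set hu.integrableOn
    (ae_restrict_of_forall_mem measurableSet_Ioi fun z hz => hpos z (lt_of_le_of_lt hs hz))
    (Ioi_subset_Ioi hst).eventuallyLE

theorem sq_setIntegral_Ioc_le {g : ℝ → ℝ} {a b : ℝ} (hab : a < b)
    (hg : MemLp g 2 (volume.restrict (Ioc a b))) :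
    (∫ x in Ioc a b, g x) ^ 2 ≤ (b - a) * ∫ x in Ioc a b, g x ^ 2 := by
  have jensen := (even_two.convexOn_pow (𝕜 := ℝ)).map_set_average_le (μ := volume)
    (t := Ioc a b) (f := g) (continuous_pow 2).continuousOn isClosed_univ (by simp [hab]) (by simp)
    (ae_of_all _ fun _ => mem_univ _) (hg.integrable one_le_two) hg.integrable_sq
  have hba : 0 < b - a := sub_pos.2 hab
  simp only [setAverage_eq, Real.volume_real_Ioc_of_le hab.le, smul_eq_mul] at jensen
  calc (∫ x in Ioc a b, g x) ^ 2 = (b - a) ^ 2 * ((b - a)⁻¹ * ∫ x in Ioc a b, g x) ^ 2 := by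
        field_simp
    _ ≤ (b - a) ^ 2 * ((b - a)⁻¹ * ∫ x in Ioc a b, g x ^ 2) := by gcongr
    _ = (b - a) * ∫ x in Ioc a b, g x ^ 2 := by field_simp

theorem sq_sub_le_mul_setIntegral_deriv_sq {f f' : ℝ → ℝ} {a b : ℝ} (hab : a < b)
    (hf : ContinuousOn f (Icc a b)) (hderiv : ∀ x ∈ Ioo a b, HasDerivAt f (f' x) x)
    (hf' : MemLp f' 2 (volume.restrict (Ioc a b))) :
    (f b - f a) ^ 2 ≤ (b - a) * ∫ x in Ioc a b, f' x ^ 2 := by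
  have ftc : ∫ x in Ioc a b, f' x = f b - f a := by
    rw [← intervalIntegral.integral_of_le hab.le]
    exact intervalIntegral.integral_eq_sub_of_hasDerivAt_of_le hab.le hf hderiv
      ((intervalIntegrable_iff_integrableOn_Ioc_of_le hab.le).2 (hf'.integrable one_le_two))
  exact ftc ▸ sq_setIntegral_Ioc_le hab hf'

theorem lintegral_Ioi_mul_setLIntegral_Ioc_eq {μ : Measure ℝ} [SFinite μ] {G w : ℝ → ℝ≥0∞}
    {a : ℝ} (hG : AEMeasurable G (μ.restrict (Ioi a))) (hw : AEMeasurable w (μ.restrict (Ioi a))) :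
    ∫⁻ x in Ioi a, (∫⁻ s in Ioc a x, G s ∂μ) * w x ∂μ
      = ∫⁻ s in Ioi a, G s * ∫⁻ x in Ici s, w x ∂μ ∂μ := by
  set ν := μ.restrict (Ioi a)
  let F : ℝ × ℝ → ℝ≥0∞ := {p : ℝ × ℝ | p.2 ≤ p.1}.indicator fun p => G p.2 * w p.1
  have hF : AEMeasurable F (ν.prod ν) :=
    ((hG.comp_quasiMeasurePreserving Measure.quasiMeasurePreserving_snd).mul
      (hw.comp_quasiMeasurePreserving Measure.quasiMeasurePreserving_fst)).indicator
      (measurableSet_le measurable_snd measurable_fst)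
  have inner_left : ∀ x, ∫⁻ s, F (x, s) ∂ν = (∫⁻ s in Ioc a x, G s ∂μ) * w x := fun x => by
    change ∫⁻ s, (Iic x).indicator (fun s => G s * w x) s ∂ν = _
    rw [lintegral_indicator measurableSet_Iic, lintegral_mul_const'' _ hG.restrict,
      Measure.restrict_restrict measurableSet_Iic, Iic_inter_Ioi]
  have inner_right : ∀ s ∈ Ioi a, ∫⁻ x, F (x, s) ∂ν = G s * ∫⁻ x in Ici s, w x ∂μ := fun s hs => by
    change ∫⁻ x, (Ici s).indicator (fun x => G s * w x) x ∂ν = _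
    rw [lintegral_indicator measurableSet_Ici, lintegral_const_mul'' _ hw.restrict,
      Measure.restrict_restrict measurableSet_Ici,
      inter_eq_self_of_subset_left (Ici_subset_Ioi.2 hs)]
  calc ∫⁻ x in Ioi a, (∫⁻ s in Ioc a x, G s ∂μ) * w x ∂μ = ∫⁻ x, ∫⁻ s, F (x, s) ∂ν ∂ν :=
        (lintegral_congr inner_left).symm
    _ = ∫⁻ s, ∫⁻ x, F (x, s) ∂ν ∂ν := lintegral_lintegral_swap hF
    _ = ∫⁻ s in Ioi a, G s * ∫⁻ x in Ici s, w x ∂μ ∂μ :=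
        setLIntegral_congr_fun measurableSet_Ioi inner_right

theorem integral_Ioi_mul_comp_mul_left (f : ℝ → ℝ) {c : ℝ} (hc : 0 < c) (s : ℝ) :
    ∫ x in Ioi s, x * f (c * x) = (c ^ 2)⁻¹ * ∫ z in Ioi (c * s), z * f z := by
  have h : (fun x => x * f (c * x)) = fun x => c⁻¹ * ((c * x) * f (c * x)) := by
    funext x; field_simp
  rw [h, integral_const_mul, integral_comp_mul_left_Ioi (fun z => z * f z) s hc, smul_eq_mul]
  ring

theorem AEMeasurable.comp_mul_left {β : Type*} [MeasurableSpace β] {f : ℝ → β}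
    (hf : AEMeasurable f) {c : ℝ} (hc : c ≠ 0) : AEMeasurable fun x => f (c * x) :=
  hf.comp_quasiMeasurePreserving (Measure.quasiMeasurePreserving_smul volume hc)

theorem lintegral_ofReal_sq_sub_mul_le {φ φ' : ℝ → ℝ} (hφ : ContinuousOn φ (Ici 0))
    (hderiv : ∀ x ∈ Ioi 0, HasDerivAt φ (φ' x) x) (hφ' : MemLp φ' 2 (volume.restrict (Ioi 0)))
    {W : ℝ → ℝ≥0∞} (hW : AEMeasurable W (volume.restrict (Ioi 0))) :
    ∫⁻ x in Ioi 0, ENNReal.ofReal ((φ x - φ 0) ^ 2) * W x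
      ≤ ∫⁻ s in Ioi 0, ENNReal.ofReal (φ' s ^ 2) * ∫⁻ x in Ici s, ENNReal.ofReal x * W x := by
  have pointwise : ∀ x ∈ Ioi (0 : ℝ), ENNReal.ofReal ((φ x - φ 0) ^ 2) * W x
      ≤ (∫⁻ s in Ioc 0 x, ENNReal.ofReal (φ' s ^ 2)) * (ENNReal.ofReal x * W x) := fun x hx => by
    have hφ'x : MemLp φ' 2 (volume.restrict (Ioc 0 x)) :=
      hφ'.mono_measure (Measure.restrict_mono Ioc_subset_Ioi_self le_rfl)
    have hsq := sq_sub_le_mul_setIntegral_deriv_sq hx (hφ.mono Icc_subset_Ici_self)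
      (fun y hy => hderiv y hy.1) hφ'x
    rw [sub_zero] at hsq
    rw [← ofReal_integral_eq_lintegral_ofReal hφ'x.integrable_sq
      (ae_of_all _ fun _ => sq_nonneg _), mul_left_comm, ← mul_assoc,
      ← ENNReal.ofReal_mul (le_of_lt hx)]
    gcongr
  calc ∫⁻ x in Ioi 0, ENNReal.ofReal ((φ x - φ 0) ^ 2) * W x
      ≤ ∫⁻ x in Ioi 0, (∫⁻ s in Ioc 0 x, ENNReal.ofReal (φ' s ^ 2)) * (ENNReal.ofReal x * W x) :=
        setLIntegral_mono' measurableSet_Ioi pointwise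
    _ = _ := lintegral_Ioi_mul_setLIntegral_Ioc_eq
        (hφ'.1.aemeasurable.pow_const 2).ennreal_ofReal
        (measurable_id.ennreal_ofReal.aemeasurable.mul hW)

theorem setLIntegral_Ici_ofReal_mul_comp_mul_left {J : ℝ → ℝ} (hJ : ∀ z, 0 ≤ J z)
    (hzJ : Integrable fun z => z * J z) {c : ℝ} (hc : 0 < c) {s : ℝ} (hs : 0 ≤ s) :
    ∫⁻ x in Ici s, ENNReal.ofReal x * ENNReal.ofReal (J (c * x))
      = ENNReal.ofReal ((c ^ 2)⁻¹ * ∫ z in Ioi (c * s), z * J z) := by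
  have hint : IntegrableOn (fun x => x * J (c * x)) (Ioi s) :=
    ((hzJ.comp_mul_left' hc.ne').const_mul c⁻¹).integrableOn.congr_fun
      (fun x _ => by field_simp) measurableSet_Ioi
  rw [← integral_Ioi_mul_comp_mul_left J hc s, ofReal_integral_eq_lintegral_ofReal hint
    (ae_restrict_of_forall_mem measurableSet_Ioi fun x hx =>
      mul_nonneg (hs.trans hx.le) (hJ _)), setLIntegral_congr Ioi_ae_eq_Ici.symm]
  refine setLIntegral_congr_fun measurableSet_Ioi fun x hx => ?_
  rw [ENNReal.ofReal_mul (hs.trans hx.le)]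

theorem lintegral_ofReal_sq_sub_mul_comp_le {J : ℝ → ℝ} (hJ : ∀ z, 0 ≤ J z)
    (hJm : AEMeasurable J) (hzJ : Integrable fun z => z * J z) {φ φ' : ℝ → ℝ}
    (hφ : ContinuousOn φ (Ici 0)) (hderiv : ∀ x ∈ Ioi 0, HasDerivAt φ (φ' x) x)
    (hφ' : MemLp φ' 2 (volume.restrict (Ioi 0))) {c : ℝ} (hc : 0 < c) :
    ∫⁻ x in Ioi 0, ENNReal.ofReal ((φ x - φ 0) ^ 2 * J (c * x))
      ≤ ∫⁻ s in Ioi 0, ENNReal.ofReal ((c ^ 2)⁻¹ * (φ' s ^ 2 * ∫ z in Ioi (c * s), z * J z)) :=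
  calc ∫⁻ x in Ioi 0, ENNReal.ofReal ((φ x - φ 0) ^ 2 * J (c * x))
    _ = ∫⁻ x in Ioi 0, ENNReal.ofReal ((φ x - φ 0) ^ 2) * ENNReal.ofReal (J (c * x)) := by
        simp_rw [ENNReal.ofReal_mul (sq_nonneg _)]
    _ ≤ ∫⁻ s in Ioi 0, ENNReal.ofReal (φ' s ^ 2) *
          ∫⁻ x in Ici s, ENNReal.ofReal x * ENNReal.ofReal (J (c * x)) :=
        lintegral_ofReal_sq_sub_mul_le hφ hderiv hφ'
          (hJm.comp_mul_left hc.ne').ennreal_ofReal.restrict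
    _ = _ := by
        refine setLIntegral_congr_fun measurableSet_Ioi fun s hs => ?_
        rw [setLIntegral_Ici_ofReal_mul_comp_mul_left hJ hzJ hc hs.le, mul_left_comm,
          ENNReal.ofReal_mul (sq_nonneg _)]

theorem sq_mul_integral_sq_sub_mul_le {J : ℝ → ℝ} (hJ : ∀ z, 0 ≤ J z) (hJm : AEMeasurable J)
    (hzJ : Integrable fun z => z * J z) {φ φ' : ℝ → ℝ} (hφ : ContinuousOn φ (Ici 0))
    (hderiv : ∀ x ∈ Ioi 0, HasDerivAt φ (φ' x) x) (hφ' : MemLp φ' 2 (volume.restrict (Ioi 0)))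
    {c : ℝ} (hc : 0 < c) :
    c ^ 2 * ∫ x in Ioi 0, (φ x - φ 0) ^ 2 * J (c * x)
      ≤ ∫ x in Ioi 0, φ' x ^ 2 * ∫ z in Ioi (c * x), z * J z := by
  set T := fun s => ∫ z in Ioi s, z * J z
  have hT_nonneg : ∀ s, 0 ≤ s → 0 ≤ T s := fun s hs =>
    setIntegral_nonneg measurableSet_Ioi fun z hz => mul_nonneg (hs.trans hz.le) (hJ z)
  have hR_nonneg : ∀ s ∈ Ioi (0 : ℝ), 0 ≤ φ' s ^ 2 * T (c * s) := fun s hs =>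
    mul_nonneg (sq_nonneg _) (hT_nonneg _ (mul_pos hc hs).le)
  have hR_int : IntegrableOn (fun x => φ' x ^ 2 * T (c * x)) (Ioi 0) :=
    hφ'.integrable_sq.mul_bdd
      ((continuous_integral_Ioi hzJ).comp (continuous_const_mul c)).aestronglyMeasurable
      (ae_of_all _ fun x => norm_integral_Ioi_le hzJ (c * x))
  have hL_meas : AEStronglyMeasurable (fun x => (φ x - φ 0) ^ 2 * J (c * x))
      (volume.restrict (Ioi 0)) :=
    ((((hφ.mono Ioi_subset_Ici_self).aestronglyMeasurable measurableSet_Ioi).sub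
      aestronglyMeasurable_const).pow 2).mul
      (hJm.comp_mul_left hc.ne').restrict.aestronglyMeasurable
  have hlint := lintegral_ofReal_sq_sub_mul_comp_le hJ hJm hzJ hφ hderiv hφ' hc
  rw [← ofReal_integral_eq_lintegral_ofReal (hR_int.const_mul _)
    (ae_restrict_of_forall_mem measurableSet_Ioi fun s hs => mul_nonneg (by positivity)
      (hR_nonneg s hs)), integral_const_mul] at hlint
  rw [← le_inv_mul_iff₀ (by positivity), integral_eq_lintegral_of_nonneg_ae
    (ae_of_all _ fun x => mul_nonneg (sq_nonneg (φ x - φ 0)) (hJ (c * x))) hL_meas]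
  exact ENNReal.toReal_le_of_le_ofReal
    (mul_nonneg (by positivity) (setIntegral_nonneg measurableSet_Ioi hR_nonneg)) hlint

theorem stmt12_general (J : ℝ → ℝ) (hJnn : ∀ z, 0 ≤ J z)
    (hJint : Integrable J)
    (hJ2 : Integrable (fun z => z ^ 2 * J z))
    (H : ℝ → ℝ) (hH : ∀ s, H s = ∫ z in Ioi s, z * J z)
    (φ : ℝ → ℝ) (hφc : ContinuousOn φ (Ici 0))
    (hφd : ∀ x ∈ Ioi (0:ℝ), HasDerivAt φ (deriv φ x) x)
    (hφ'2 : MemLp (deriv φ) 2 (volume.restrict (Ioi 0)))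
    (lam : ℝ) (hlam : 0 < lam) :
    (lam ^ 2 * ∫ x in Ioi (0:ℝ), (φ x - φ 0) ^ 2 * J (lam * x) ≤
        ∫ x in Ioi (0:ℝ), (deriv φ x) ^ 2 * H (lam * x)) ∧
    AntitoneOn H (Ici 0) ∧ (∃ C, ∀ s ≥ (0:ℝ), |H s| ≤ C) ∧
    Tendsto H atTop (nhds 0) := by
  have hzJ : Integrable fun z => z * J z := hJint.id_mul_of_sq_mul hJ2
  obtain rfl : H = fun s => ∫ z in Ioi s, z * J z := funext hH
  exact ⟨sq_mul_integral_sq_sub_mul_le hJnn hJint.aemeasurable hzJ hφc hφd hφ'2 hlam,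
    antitoneOn_integral_Ioi hzJ fun z hz => mul_nonneg hz.le (hJnn z),
    ⟨∫ z, ‖z * J z‖, fun s _ => norm_integral_Ioi_le hzJ s⟩, tendsto_integral_Ioi_atTop hzJ⟩

/-- control of the interaction of the infinite edges with the vertex. -/
theorem stmt12 (J : ℝ → ℝ) (hJnn : ∀ z, 0 ≤ J z) (hJsymm : ∀ z, J (-z) = J z)
    (hJint : Integrable J)
    (hJmono : ∀ ⦃z w : ℝ⦄, 0 < z → z ≤ w → J w ≤ J z)
    (hJ2 : Integrable (fun z => z ^ 2 * J z))
    (H : ℝ → ℝ) (hH : ∀ s, H s = ∫ z in Ioi s, z * J z)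
    (φ : ℝ → ℝ) (hφc : ContinuousOn φ (Ici 0))
    (hφd : ∀ x ∈ Ioi (0:ℝ), HasDerivAt φ (deriv φ x) x)
    (hφ2 : MemLp φ 2 (volume.restrict (Ioi 0)))
    (hφ'2 : MemLp (deriv φ) 2 (volume.restrict (Ioi 0)))
    (lam : ℝ) (hlam : 0 < lam) :
    (lam ^ 2 * ∫ x in Ioi (0:ℝ), (φ x - φ 0) ^ 2 * J (lam * x) ≤
        ∫ x in Ioi (0:ℝ), (deriv φ x) ^ 2 * H (lam * x)) ∧
    AntitoneOn H (Ici 0) ∧ (∃ C, ∀ s ≥ (0:ℝ), |H s| ≤ C) ∧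
    Tendsto H atTop (nhds 0) :=
  stmt12_general J hJnn hJint hJ2 H hH φ hφc hφd hφ'2 lam hlam
end

section
/- Let ρ ∈ L¹(ℝ) be nonnegative, even, non-increasing on (0,∞), with ∫ r²ρ(r) dr < ∞, and let ρ_ε(x) = ε⁻¹ ρ(x/ε). Let -∞ ≤ a < 0 < b ≤ +∞ and φ ∈ H¹((a,b)). Then lim_{ε→0} ε⁻² ∫_a^0 ∫_0^b ρ_ε(x-y) (φ(x) - φ(y))² dx dy = 0. -/
/-!
Fix `δ > 0` and split the pairs `x < 0 < y` according to whether `y - x ≤ δ`. For a close pair,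
the fundamental theorem of calculus and Cauchy–Schwarz give `(φ y - φ x)² ≤ (y - x) W(δ)`, where
`W(δ)` is the energy of `φ'` on `(-δ, δ)`. The pairs `x < 0 < y` with `y - x = s` form a segment
of length `s`, so integrating `ρ_ε(y - x) (y - x)` over them produces the second moment of `ρ_ε`,
which is `ε²` times that of `ρ`: close pairs contribute at most `W(δ) ∫ r² ρ` to the rescaled
energy. For a far pair, `(φ x - φ y)² ≤ 2 φ(x)² + 2 φ(y)²`, and the mass of `ρ_ε` beyond `δ` is
at most `ε² δ⁻² ∫_{r > δ/ε} r² ρ(r)`, so far pairs contribute `O(δ⁻² ∫_{r > δ/ε} r² ρ)`, which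
vanishes as `ε → 0`. Since `W(δ) → 0` as `δ → 0`, the rescaled energy tends to `0`.
-/

open MeasureTheory Set Filter Topology
open scoped ENNReal

theorem measurable_of_even_of_antitoneOn {ρ : ℝ → ℝ} (heven : ∀ z, ρ (-z) = ρ z)
    (hanti : AntitoneOn ρ (Ioi 0)) : Measurable ρ := by
  refine measurable_of_Ioi fun c => ?_
  obtain ⟨u, hu, hu_eq⟩ := (ordConnected_Ioi (a := c)).preimage_antitoneOn hanti
  have habs : ∀ z, ρ |z| = ρ z := fun z => by
    rcases abs_choice z with h | h <;> simp [h, heven]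
  have hsplit : ρ ⁻¹' Ioi c = (ρ ⁻¹' Ioi c ∩ {0}) ∪ abs ⁻¹' (Ioi 0 ∩ u) := by
    rw [← hu_eq]
    ext z
    by_cases hz : z = 0 <;> simp [hz, habs]
  rw [hsplit]
  exact (subsingleton_singleton.anti inter_subset_right).measurableSet.union
    ((measurableSet_Ioi.inter hu.measurableSet).preimage continuous_abs.measurable)

theorem ofReal_integral_le_lintegral_ofReal {α : Type*} [MeasurableSpace α] {μ : Measure α}
    (f : α → ℝ) : ENNReal.ofReal (∫ x, f x ∂μ) ≤ ∫⁻ x, ENNReal.ofReal (f x) ∂μ := by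
  by_cases hf : Integrable f μ
  · rw [integral_eq_lintegral_pos_part_sub_lintegral_neg_part hf]
    exact (ENNReal.ofReal_le_ofReal (sub_le_self _ ENNReal.toReal_nonneg)).trans
      ENNReal.ofReal_toReal_le
  · simp [integral_undef hf]

theorem sq_setIntegral_le_measureReal_mul_setIntegral_sq {α : Type*} [MeasurableSpace α]
    {μ : Measure α} {s : Set α} (hs : μ s ≠ ∞) {f : α → ℝ} (hf : MemLp f 2 (μ.restrict s)) :
    (∫ x in s, f x ∂μ) ^ 2 ≤ μ.real s * ∫ x in s, f x ^ 2 ∂μ := by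
  rcases eq_or_ne (μ s) 0 with h0 | h0
  · simp [Measure.restrict_eq_zero.2 h0]
  have : IsFiniteMeasure (μ.restrict s) := isFiniteMeasure_restrict.2 hs
  have hjensen := (even_two.convexOn_pow (𝕜 := ℝ)).map_set_average_le
    (continuous_pow 2).continuousOn isClosed_univ h0 hs (by simp) (hf.integrable one_le_two)
    hf.integrable_sq
  simp only [setAverage_eq, smul_eq_mul] at hjensen
  have hpos : 0 < μ.real s := ENNReal.toReal_pos h0 hs
  calc (∫ x in s, f x ∂μ) ^ 2 = μ.real s ^ 2 * ((μ.real s)⁻¹ * ∫ x in s, f x ∂μ) ^ 2 := by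
        field_simp
    _ ≤ μ.real s ^ 2 * ((μ.real s)⁻¹ * ∫ x in s, f x ^ 2 ∂μ) := by gcongr
    _ = μ.real s * ∫ x in s, f x ^ 2 ∂μ := by field_simp

theorem ENNReal.tendsto_nhds_zero_of_eventually_le_add {ι ι' : Type*} {l : Filter ι}
    {l' : Filter ι'} [l'.NeBot] {G : ι → ℝ≥0∞} {A : ι' → ℝ≥0∞} {B : ι' → ι → ℝ≥0∞}
    (hA : Tendsto A l' (𝓝 0)) (hB : ∀ᶠ δ in l', Tendsto (B δ) l (𝓝 0))
    (hG : ∀ᶠ δ in l', ∀ᶠ ε in l, G ε ≤ A δ + B δ ε) : Tendsto G l (𝓝 0) := by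
  refine ENNReal.tendsto_nhds_zero.2 fun η hη => ?_
  have hη2 : 0 < η / 2 := ENNReal.half_pos hη.ne'
  obtain ⟨δ, hAδ, hBδ, hGδ⟩ := ((hA.eventually (gt_mem_nhds hη2)).and (hB.and hG)).exists
  filter_upwards [hBδ.eventually (gt_mem_nhds hη2), hGδ] with ε hBε hGε
  calc G ε ≤ A δ + B δ ε := hGε
    _ ≤ η / 2 + η / 2 := add_le_add hAδ.le hBε.le
    _ = η := ENNReal.add_halves η

theorem tendsto_setLIntegral_Ioi_atTop {μ : Measure ℝ} {f : ℝ → ℝ≥0∞} (hf : ∫⁻ t, f t ∂μ ≠ ∞) :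
    Tendsto (fun r => ∫⁻ t in Ioi r, f t ∂μ) atTop (𝓝 0) := by
  have hempty : ⋂ r : ℝ, Ioi r = ∅ := iInter_eq_empty_iff.2 fun t => ⟨t, lt_irrefl t⟩
  have hfin : μ.withDensity f (Ioi 0) ≠ ∞ :=
    ne_top_of_le_ne_top (by simpa using hf) (measure_mono (subset_univ _))
  have := tendsto_measure_iInter_atTop (fun r => measurableSet_Ioi.nullMeasurableSet)
    (fun r s h => Ioi_subset_Ioi h) ⟨0, hfin⟩
  rw [hempty, measure_empty] at this
  exact this.congr fun r => withDensity_apply f measurableSet_Ioi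

theorem tendsto_restrict_Ioo_neg_nhdsGT_zero (s : Set ℝ) :
    Tendsto (fun δ => volume.restrict s (Ioo (-δ) δ)) (𝓝[>] 0) (𝓝 0) := by
  have hlen : Tendsto (fun δ : ℝ => ENNReal.ofReal (δ - -δ)) (𝓝[>] 0) (𝓝 0) := by
    simpa using ENNReal.tendsto_ofReal
      (((continuous_id.sub continuous_neg).tendsto 0).mono_left nhdsWithin_le_nhds)
  exact tendsto_of_tendsto_of_tendsto_of_le_of_le tendsto_const_nhds hlen (fun _ => zero_le)
    fun δ => (Measure.restrict_apply_le _ _).trans_eq Real.volume_Ioo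

theorem lintegral_comp_div {H : ℝ → ℝ≥0∞} (hH : Measurable H) {ε : ℝ} (hε : 0 < ε) :
    ∫⁻ s, H (s / ε) = ENNReal.ofReal ε * ∫⁻ t, H t := by
  have hmap : Measure.map (ε⁻¹ * ·) volume = ENNReal.ofReal |ε⁻¹⁻¹| • volume :=
    Real.map_volume_mul_left (inv_ne_zero hε.ne')
  simp_rw [div_eq_inv_mul]
  rw [← lintegral_map hH (measurable_const_mul ε⁻¹), hmap, lintegral_smul_measure,
    inv_inv, abs_of_pos hε, smul_eq_mul]

theorem setLIntegral_Ioi_comp_div {H : ℝ → ℝ≥0∞} (hH : Measurable H) {ε : ℝ} (hε : 0 < ε)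
    (r : ℝ) : ∫⁻ s in Ioi r, H (s / ε) = ENNReal.ofReal ε * ∫⁻ t in Ioi (r / ε), H t := by
  rw [← lintegral_indicator measurableSet_Ioi, ← lintegral_indicator measurableSet_Ioi,
    ← lintegral_comp_div (hH.indicator measurableSet_Ioi) hε]
  congr 1 with s
  simp [indicator, div_lt_div_iff_of_pos_right hε]

theorem setLIntegral_Ioi_le_mul_setLIntegral_sq_mul (k : ℝ → ℝ≥0∞) {r : ℝ} (hr : 0 < r) :
    ∫⁻ t in Ioi r, k t ≤
      ENNReal.ofReal (r⁻¹ ^ 2) * ∫⁻ t in Ioi r, ENNReal.ofReal (t ^ 2) * k t := by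
  rw [← lintegral_const_mul' _ _ ENNReal.ofReal_ne_top]
  refine setLIntegral_mono' measurableSet_Ioi fun t ht => ?_
  have hsq : 1 ≤ r⁻¹ ^ 2 * t ^ 2 := by
    rw [← mul_pow, inv_mul_eq_div]
    exact one_le_pow₀ ((one_le_div hr).2 (le_of_lt ht))
  rw [← mul_assoc, ← ENNReal.ofReal_mul (by positivity)]
  exact le_mul_of_one_le_left zero_le (ENNReal.one_le_ofReal.2 hsq)

theorem lintegral_Iio_lintegral_Ioi_comp_sub {g : ℝ → ℝ≥0∞} (hg : Measurable g) :
    ∫⁻ x in Iio 0, ∫⁻ y in Ioi 0, g (y - x) = ∫⁻ s, ENNReal.ofReal s * g s := by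
  have hinner : ∀ x, ∫⁻ y in Ioi 0, g (y - x) = ∫⁻ s, (Ioi (-x)).indicator g s := fun x => by
    rw [← lintegral_indicator measurableSet_Ioi, ← lintegral_sub_right_eq_self _ (-x)]
    congr 1 with s
    by_cases hs : -x < s
    · simp [hs, show 0 < s + x by linarith]
    · simp [hs, show ¬ 0 < s + x by linarith]
  have hmeas : Measurable (Function.uncurry fun x s => (Ioi (-x)).indicator g s) := by
    have : Function.uncurry (fun x s => (Ioi (-x)).indicator g s) =
        {p : ℝ × ℝ | -p.1 < p.2}.indicator (fun p => g p.2) := by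
      ext ⟨x, s⟩
      simp [indicator]
    rw [this]
    exact (hg.comp measurable_snd).indicator (measurableSet_lt measurable_fst.neg measurable_snd)
  simp_rw [hinner]
  rw [lintegral_lintegral_swap hmeas.aemeasurable]
  congr 1 with s
  have : (fun x => (Ioi (-x)).indicator g s) = (Ioi (-s)).indicator (fun _ => g s) := by
    ext x
    simp [indicator, neg_lt]
  rw [this, lintegral_indicator measurableSet_Ioi, setLIntegral_const,
    Measure.restrict_apply measurableSet_Ioi, Ioi_inter_Iio, Real.volume_Ioo, mul_comm]
  simp

theorem lintegral_lintegral_ofReal_sub_mul_le {κ : ℝ → ℝ≥0∞} (hκ : Measurable κ)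
    {s t : Set ℝ} (hs : s ⊆ Iio 0) (ht : t ⊆ Ioi 0) (c : ℝ≥0∞) :
    ∫⁻ x in s, ∫⁻ y in t, ENNReal.ofReal (y - x) * κ (y - x) * c ≤
      (∫⁻ z, ENNReal.ofReal (z ^ 2) * κ z) * c := by
  have hsq : ∀ z, ENNReal.ofReal z * ENNReal.ofReal z ≤ ENNReal.ofReal (z ^ 2) := fun z => by
    rcases le_total 0 z with h | h
    · rw [← ENNReal.ofReal_mul h, sq]
    · simp [ENNReal.ofReal_of_nonpos h]
  calc _ ≤ ∫⁻ x in Iio 0, ∫⁻ y in Ioi 0, ENNReal.ofReal (y - x) * κ (y - x) * c := by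
        gcongr
    _ = ∫⁻ z, ENNReal.ofReal z * (ENNReal.ofReal z * κ z * c) :=
        lintegral_Iio_lintegral_Ioi_comp_sub ((measurable_id.ennreal_ofReal.mul hκ).mul_const c)
    _ ≤ ∫⁻ z, ENNReal.ofReal (z ^ 2) * κ z * c := by
        refine lintegral_mono fun z => ?_
        rw [← mul_assoc, ← mul_assoc]
        gcongr
        exact hsq z
    _ = _ := lintegral_mul_const _ ((measurable_id.pow_const 2).ennreal_ofReal.mul hκ)

theorem lintegral_lintegral_comp_sub_mul_add_le {ψ Φ : ℝ → ℝ≥0∞} (hψ : Measurable ψ)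
    {s t : Set ℝ} (hΦs : AEMeasurable Φ (volume.restrict s))
    (hΦt : AEMeasurable Φ (volume.restrict t)) :
    ∫⁻ x in s, ∫⁻ y in t, ψ (y - x) * (Φ x + Φ y) ≤
      (∫⁻ z, ψ z) * ((∫⁻ x in s, Φ x) + ∫⁻ y in t, Φ y) := by
  have hψ' : Measurable fun p : ℝ × ℝ => ψ (p.2 - p.1) :=
    hψ.comp (measurable_snd.sub measurable_fst)
  have hsplit : ∀ x, ∫⁻ y in t, ψ (y - x) * (Φ x + Φ y) =
      (∫⁻ y in t, ψ (y - x)) * Φ x + ∫⁻ y in t, ψ (y - x) * Φ y := fun x => by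
    have hψx : Measurable fun y => ψ (y - x) := hψ.comp (measurable_id.sub_const x)
    simp_rw [mul_add]
    rw [lintegral_add_left (hψx.mul_const _), lintegral_mul_const _ hψx]
  have hleft : ∫⁻ x in s, (∫⁻ y in t, ψ (y - x)) * Φ x ≤ (∫⁻ z, ψ z) * ∫⁻ x in s, Φ x := by
    rw [← lintegral_const_mul'' _ hΦs]
    refine lintegral_mono fun x => mul_le_mul_left ?_ _
    exact (setLIntegral_le_lintegral _ _).trans_eq (lintegral_sub_right_eq_self ψ x)
  have hright : ∫⁻ x in s, ∫⁻ y in t, ψ (y - x) * Φ y ≤ (∫⁻ z, ψ z) * ∫⁻ y in t, Φ y := by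
    rw [lintegral_lintegral_swap (hψ'.aemeasurable.mul hΦt.comp_snd),
      ← lintegral_const_mul'' _ hΦt]
    refine lintegral_mono fun y => ?_
    have hψy : Measurable fun x => ψ (y - x) := hψ.comp (measurable_const.sub measurable_id)
    rw [lintegral_mul_const _ hψy]
    refine mul_le_mul_left ?_ _
    exact (setLIntegral_le_lintegral _ _).trans_eq (lintegral_sub_left_eq_self ψ y)
  have hmeas : AEMeasurable (fun x => (∫⁻ y in t, ψ (y - x)) * Φ x) (volume.restrict s) :=
    hψ'.lintegral_prod_right'.aemeasurable.mul hΦs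
  simp_rw [hsplit]
  rw [lintegral_add_left' hmeas, mul_add]
  exact add_le_add hleft hright

theorem enorm_rescaled_cross_le {ρ : ℝ → ℝ} (heven : ∀ z, ρ (-z) = ρ z) (φ : ℝ → ℝ)
    (s t : Set ℝ) {ε : ℝ} (hε : 0 < ε) :
    ‖ε⁻¹ ^ 2 * ∫ x in s, ∫ y in t, ε⁻¹ * ρ ((x - y) / ε) * (φ x - φ y) ^ 2‖ₑ ≤
      ENNReal.ofReal ε⁻¹ ^ 3 *
        ∫⁻ x in s, ∫⁻ y in t, ‖ρ ((y - x) / ε)‖ₑ * ENNReal.ofReal ((φ x - φ y) ^ 2) := by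
  have hε' : 0 ≤ ε⁻¹ := inv_nonneg.2 hε.le
  have hintegrand : ∀ x y, ‖ε⁻¹ * ρ ((x - y) / ε) * (φ x - φ y) ^ 2‖ₑ =
      ENNReal.ofReal ε⁻¹ * (‖ρ ((y - x) / ε)‖ₑ * ENNReal.ofReal ((φ x - φ y) ^ 2)) := fun x y => by
    rw [enorm_mul, enorm_mul, Real.enorm_of_nonneg hε', Real.enorm_of_nonneg (sq_nonneg _),
      show (x - y) / ε = -((y - x) / ε) by ring, heven, mul_assoc]
  calc _ ≤ ENNReal.ofReal ε⁻¹ ^ 2 * ∫⁻ x in s, ∫⁻ y in t,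
        ‖ε⁻¹ * ρ ((x - y) / ε) * (φ x - φ y) ^ 2‖ₑ := by
        rw [enorm_mul, enorm_pow, Real.enorm_of_nonneg hε']
        gcongr
        exact (enorm_integral_le_lintegral_enorm _).trans
          (lintegral_mono fun x => enorm_integral_le_lintegral_enorm _)
    _ = _ := by
        simp_rw [hintegrand, lintegral_const_mul' _ _ ENNReal.ofReal_ne_top]
        ring

/-- `κ` is an unnormalised kernel: for `κ = ρ (· / ε)`, `ε⁻³ * crossEnergy D φ κ` is the rescaled
cross energy `ε⁻² ∫∫ ρ_ε (x - y) (φ x - φ y)²` of the two half-intervals. -/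
noncomputable def crossEnergy (D : Set ℝ) (φ : ℝ → ℝ) (κ : ℝ → ℝ≥0∞) : ℝ≥0∞ :=
  ∫⁻ x in D ∩ Iio 0, ∫⁻ y in D ∩ Ioi 0, κ (y - x) * ENNReal.ofReal ((φ x - φ y) ^ 2)

section Sobolev

variable {D : Set ℝ} {φ : ℝ → ℝ}

theorem sq_sub_le_mul_setIntegral_sq_derivWithin (hDo : IsOpen D) (hDc : D.OrdConnected)
    (hφ : DifferentiableOn ℝ φ D) (hw : MemLp (derivWithin φ D) 2 (volume.restrict D))
    {x y : ℝ} (hx : x ∈ D) (hy : y ∈ D) (hxy : x ≤ y) :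
    (φ y - φ x) ^ 2 ≤ (y - x) * ∫ u in Ioc x y, derivWithin φ D u ^ 2 := by
  have hsub : Icc x y ⊆ D := hDc.out hx hy
  have hmem : MemLp (derivWithin φ D) 2 (volume.restrict (Ioc x y)) :=
    hw.mono_measure (Measure.restrict_mono (Ioc_subset_Icc_self.trans hsub) le_rfl)
  have hftc : ∫ u in Ioc x y, derivWithin φ D u = φ y - φ x := by
    rw [← intervalIntegral.integral_of_le hxy]
    refine intervalIntegral.integral_eq_sub_of_hasDerivAt (fun u hu => ?_)
      ((intervalIntegrable_iff_integrableOn_Ioc_of_le hxy).2 (hmem.integrable one_le_two))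
    have huD : u ∈ D := hsub (uIcc_of_le hxy ▸ hu)
    rw [derivWithin_of_isOpen hDo huD]
    exact ((hφ u huD).differentiableAt (hDo.mem_nhds huD)).hasDerivAt
  rw [← hftc, ← Real.volume_real_Ioc_of_le hxy]
  exact sq_setIntegral_le_measureReal_mul_setIntegral_sq measure_Ioc_lt_top.ne hmem

theorem ofReal_sq_sub_le_mul_setLIntegral_sq_derivWithin (hDo : IsOpen D) (hDc : D.OrdConnected)
    (hφ : DifferentiableOn ℝ φ D) (hw : MemLp (derivWithin φ D) 2 (volume.restrict D))
    {x y : ℝ} (hx : x ∈ D) (hy : y ∈ D) (hxy : x ≤ y) {s : Set ℝ} (hs : Ioc x y ⊆ s) :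
    ENNReal.ofReal ((φ y - φ x) ^ 2) ≤
      ENNReal.ofReal (y - x) *
        ∫⁻ u in s, ENNReal.ofReal (derivWithin φ D u ^ 2) ∂volume.restrict D := by
  rw [Measure.restrict_restrict' hDo.measurableSet]
  calc ENNReal.ofReal ((φ y - φ x) ^ 2)
      ≤ ENNReal.ofReal ((y - x) * ∫ u in Ioc x y, derivWithin φ D u ^ 2) :=
        ENNReal.ofReal_le_ofReal (sq_sub_le_mul_setIntegral_sq_derivWithin hDo hDc hφ hw hx hy hxy)
    _ ≤ ENNReal.ofReal (y - x) * ∫⁻ u in Ioc x y, ENNReal.ofReal (derivWithin φ D u ^ 2) := by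
        rw [ENNReal.ofReal_mul (sub_nonneg.2 hxy)]
        gcongr
        exact ofReal_integral_le_lintegral_ofReal _
    _ ≤ _ := by
        gcongr
        exact subset_inter hs (Ioc_subset_Icc_self.trans (hDc.out hx hy))

theorem kernel_mul_ofReal_sq_sub_le (hDo : IsOpen D) (hDc : D.OrdConnected)
    (hφ : DifferentiableOn ℝ φ D) (hw : MemLp (derivWithin φ D) 2 (volume.restrict D))
    (κ : ℝ → ℝ≥0∞) (δ : ℝ) {x y : ℝ} (hx : x ∈ D) (hy : y ∈ D) (hx0 : x < 0) (hy0 : 0 < y) :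
    κ (y - x) * ENNReal.ofReal ((φ x - φ y) ^ 2) ≤
      ENNReal.ofReal (y - x) * κ (y - x) *
          ∫⁻ u in Ioo (-δ) δ, ENNReal.ofReal (derivWithin φ D u ^ 2) ∂volume.restrict D +
        (Ioi δ).indicator κ (y - x) *
          (ENNReal.ofReal (2 * φ x ^ 2) + ENNReal.ofReal (2 * φ y ^ 2)) := by
  by_cases hδ : δ < y - x
  · rw [indicator_of_mem (show y - x ∈ Ioi δ from hδ)]
    refine le_add_left ?_
    gcongr
    exact (ENNReal.ofReal_le_ofReal (by nlinarith [sq_nonneg (φ x + φ y)])).trans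
      ENNReal.ofReal_add_le
  · rw [indicator_of_notMem (show y - x ∉ Ioi δ from hδ), zero_mul, add_zero,
      mul_comm (ENNReal.ofReal _), mul_assoc, sub_sq_comm]
    gcongr
    exact ofReal_sq_sub_le_mul_setLIntegral_sq_derivWithin hDo hDc hφ hw hx hy (by linarith)
      fun u hu => ⟨by linarith [hu.1, hu.2], by linarith [hu.1, hu.2]⟩

theorem crossEnergy_le (hDo : IsOpen D) (hDc : D.OrdConnected)
    (hφ : DifferentiableOn ℝ φ D) (hφ2 : MemLp φ 2 (volume.restrict D))
    (hw : MemLp (derivWithin φ D) 2 (volume.restrict D)) {κ : ℝ → ℝ≥0∞} (hκ : Measurable κ)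
    (δ : ℝ) :
    crossEnergy D φ κ ≤
      (∫⁻ s, ENNReal.ofReal (s ^ 2) * κ s) *
          ∫⁻ u in Ioo (-δ) δ, ENNReal.ofReal (derivWithin φ D u ^ 2) ∂volume.restrict D +
        (∫⁻ s in Ioi δ, κ s) * ∫⁻ u in D, ENNReal.ofReal (2 * φ u ^ 2) := by
  set W := ∫⁻ u in Ioo (-δ) δ, ENNReal.ofReal (derivWithin φ D u ^ 2) ∂volume.restrict D
  set Φ : ℝ → ℝ≥0∞ := fun u => ENNReal.ofReal (2 * φ u ^ 2)
  have hS₁ : MeasurableSet (D ∩ Iio 0) := hDo.measurableSet.inter measurableSet_Iio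
  have hS₂ : MeasurableSet (D ∩ Ioi 0) := hDo.measurableSet.inter measurableSet_Ioi
  have hg : Measurable fun z => ENNReal.ofReal z * κ z * W :=
    (measurable_id.ennreal_ofReal.mul hκ).mul_const W
  have hfar : ∫⁻ x in D ∩ Iio 0, ∫⁻ y in D ∩ Ioi 0, (Ioi δ).indicator κ (y - x) * (Φ x + Φ y) ≤
      (∫⁻ s in Ioi δ, κ s) * ∫⁻ u in D, Φ u := by
    have hΦ : AEMeasurable Φ (volume.restrict D) :=
      ((hφ2.aestronglyMeasurable.aemeasurable.pow_const 2).const_mul 2).ennreal_ofReal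
    have hdisj : Disjoint (D ∩ Iio 0) (D ∩ Ioi 0) :=
      Ioi_disjoint_Iio_same.symm.mono inter_subset_right inter_subset_right
    calc _ ≤ (∫⁻ z, (Ioi δ).indicator κ z) *
          ((∫⁻ x in D ∩ Iio 0, Φ x) + ∫⁻ y in D ∩ Ioi 0, Φ y) :=
          lintegral_lintegral_comp_sub_mul_add_le (hκ.indicator measurableSet_Ioi)
            (hΦ.mono_measure (Measure.restrict_mono inter_subset_left le_rfl))
            (hΦ.mono_measure (Measure.restrict_mono inter_subset_left le_rfl))
      _ ≤ _ := by
        rw [lintegral_indicator measurableSet_Ioi, ← lintegral_union hS₂ hdisj]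
        gcongr
        exact union_subset inter_subset_left inter_subset_left
  calc crossEnergy D φ κ ≤ ∫⁻ x in D ∩ Iio 0, ∫⁻ y in D ∩ Ioi 0,
        (ENNReal.ofReal (y - x) * κ (y - x) * W + (Ioi δ).indicator κ (y - x) * (Φ x + Φ y)) :=
        setLIntegral_mono' hS₁ fun x hx => setLIntegral_mono' hS₂ fun y hy =>
          kernel_mul_ofReal_sq_sub_le hDo hDc hφ hw κ δ hx.1 hy.1 hx.2 hy.2
    _ = (∫⁻ x in D ∩ Iio 0, ∫⁻ y in D ∩ Ioi 0, ENNReal.ofReal (y - x) * κ (y - x) * W) +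
        ∫⁻ x in D ∩ Iio 0, ∫⁻ y in D ∩ Ioi 0, (Ioi δ).indicator κ (y - x) * (Φ x + Φ y) := by
      have hgx : ∀ x, Measurable fun y => ENNReal.ofReal (y - x) * κ (y - x) * W :=
        fun x => hg.comp (measurable_id.sub_const x)
      simp_rw [lintegral_add_left (hgx _)]
      exact lintegral_add_left (hg.comp (measurable_snd.sub measurable_fst)).lintegral_prod_right' _
    _ ≤ _ := add_le_add (lintegral_lintegral_ofReal_sub_mul_le hκ inter_subset_right
        inter_subset_right W) hfar

theorem crossEnergy_rescaled_le (hDo : IsOpen D) (hDc : D.OrdConnected)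
    (hφ : DifferentiableOn ℝ φ D) (hφ2 : MemLp φ 2 (volume.restrict D))
    (hw : MemLp (derivWithin φ D) 2 (volume.restrict D)) {k : ℝ → ℝ≥0∞} (hk : Measurable k)
    {ε δ : ℝ} (hε : 0 < ε) (hδ : 0 < δ) :
    ENNReal.ofReal ε⁻¹ ^ 3 * crossEnergy D φ (fun s => k (s / ε)) ≤
      (∫⁻ t, ENNReal.ofReal (t ^ 2) * k t) *
          ∫⁻ u in Ioo (-δ) δ, ENNReal.ofReal (derivWithin φ D u ^ 2) ∂volume.restrict D +
        ENNReal.ofReal δ⁻¹ ^ 2 * (∫⁻ t in Ioi (δ / ε), ENNReal.ofReal (t ^ 2) * k t) *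
          ∫⁻ u in D, ENNReal.ofReal (2 * φ u ^ 2) := by
  set m : ℝ → ℝ≥0∞ := fun t => ENNReal.ofReal (t ^ 2) * k t
  set W := ∫⁻ u in Ioo (-δ) δ, ENNReal.ofReal (derivWithin φ D u ^ 2) ∂volume.restrict D
  set N := ∫⁻ u in D, ENNReal.ofReal (2 * φ u ^ 2)
  have hm : Measurable m := (measurable_id.pow_const 2).ennreal_ofReal.mul hk
  have hmoment : ∫⁻ s, ENNReal.ofReal (s ^ 2) * k (s / ε) = ENNReal.ofReal ε ^ 3 * ∫⁻ t, m t := by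
    have hscale : ∀ s, ENNReal.ofReal (s ^ 2) * k (s / ε) = ENNReal.ofReal ε ^ 2 * m (s / ε) :=
      fun s => by
        rw [← mul_assoc, ← ENNReal.ofReal_pow hε.le, ← ENNReal.ofReal_mul (by positivity)]
        field_simp
    simp_rw [hscale]
    rw [lintegral_const_mul' _ _ (ENNReal.pow_ne_top ENNReal.ofReal_ne_top),
      lintegral_comp_div hm hε]
    ring
  have htail : ∫⁻ s in Ioi δ, k (s / ε) ≤
      ENNReal.ofReal ε ^ 3 * ENNReal.ofReal δ⁻¹ ^ 2 * ∫⁻ t in Ioi (δ / ε), m t := by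
    rw [setLIntegral_Ioi_comp_div hk hε]
    calc ENNReal.ofReal ε * ∫⁻ t in Ioi (δ / ε), k t
        ≤ ENNReal.ofReal ε * (ENNReal.ofReal ((δ / ε)⁻¹ ^ 2) * ∫⁻ t in Ioi (δ / ε), m t) := by
          gcongr
          exact setLIntegral_Ioi_le_mul_setLIntegral_sq_mul k (div_pos hδ hε)
      _ = _ := by
        rw [← mul_assoc, ← ENNReal.ofReal_pow hε.le, ← ENNReal.ofReal_pow (by positivity),
          ← ENNReal.ofReal_mul hε.le, ← ENNReal.ofReal_mul (by positivity)]
        field_simp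
  have hcancel : ENNReal.ofReal ε⁻¹ ^ 3 * ENNReal.ofReal ε ^ 3 = 1 := by
    rw [← mul_pow, ← ENNReal.ofReal_mul (inv_nonneg.2 hε.le), inv_mul_cancel₀ hε.ne',
      ENNReal.ofReal_one, one_pow]
  calc _ ≤ ENNReal.ofReal ε⁻¹ ^ 3 *
        ((∫⁻ s, ENNReal.ofReal (s ^ 2) * k (s / ε)) * W + (∫⁻ s in Ioi δ, k (s / ε)) * N) := by
        gcongr
        exact crossEnergy_le hDo hDc hφ hφ2 hw (κ := fun s => k (s / ε))
          (hk.comp (measurable_id.div_const ε)) δ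
    _ ≤ ENNReal.ofReal ε⁻¹ ^ 3 * (ENNReal.ofReal ε ^ 3 * (∫⁻ t, m t) * W +
          ENNReal.ofReal ε ^ 3 * ENNReal.ofReal δ⁻¹ ^ 2 * (∫⁻ t in Ioi (δ / ε), m t) * N) := by
        rw [hmoment]
        gcongr
    _ = (ENNReal.ofReal ε⁻¹ ^ 3 * ENNReal.ofReal ε ^ 3) * ((∫⁻ t, m t) * W +
          ENNReal.ofReal δ⁻¹ ^ 2 * (∫⁻ t in Ioi (δ / ε), m t) * N) := by ring
    _ = _ := by rw [hcancel, one_mul]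

theorem tendsto_crossEnergy_rescaled (hDo : IsOpen D) (hDc : D.OrdConnected)
    (hφ : DifferentiableOn ℝ φ D) (hφ2 : MemLp φ 2 (volume.restrict D))
    (hw : MemLp (derivWithin φ D) 2 (volume.restrict D)) {k : ℝ → ℝ≥0∞} (hk : Measurable k)
    (hM : ∫⁻ t, ENNReal.ofReal (t ^ 2) * k t ≠ ∞) :
    Tendsto (fun ε => ENNReal.ofReal ε⁻¹ ^ 3 * crossEnergy D φ fun s => k (s / ε))
      (𝓝[>] 0) (𝓝 0) := by
  have hN : ∫⁻ u in D, ENNReal.ofReal (2 * φ u ^ 2) ≠ ∞ :=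
    (hφ2.integrable_sq.const_mul 2).lintegral_lt_top.ne
  have hnear := ENNReal.Tendsto.const_mul (tendsto_setLIntegral_zero
    hw.integrable_sq.lintegral_lt_top.ne (tendsto_restrict_Ioo_neg_nhdsGT_zero D)) (Or.inr hM)
  have hfar : ∀ᶠ δ in 𝓝[>] (0 : ℝ), Tendsto (fun ε => ENNReal.ofReal δ⁻¹ ^ 2 *
      (∫⁻ t in Ioi (δ / ε), ENNReal.ofReal (t ^ 2) * k t) *
        ∫⁻ u in D, ENNReal.ofReal (2 * φ u ^ 2)) (𝓝[>] 0) (𝓝 0) := by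
    filter_upwards [self_mem_nhdsWithin] with δ (hδ : 0 < δ)
    have hdiv : Tendsto (fun ε : ℝ => δ / ε) (𝓝[>] 0) atTop :=
      (tendsto_inv_nhdsGT_zero.const_mul_atTop hδ).congr fun ε => (div_eq_mul_inv δ ε).symm
    simpa only [Function.comp_apply, mul_zero, zero_mul] using ENNReal.Tendsto.mul_const
      (ENNReal.Tendsto.const_mul ((tendsto_setLIntegral_Ioi_atTop hM).comp hdiv)
        (Or.inr (ENNReal.pow_ne_top ENNReal.ofReal_ne_top))) (Or.inr hN)
  refine ENNReal.tendsto_nhds_zero_of_eventually_le_add (by simpa only [mul_zero] using hnear)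
    hfar ?_
  filter_upwards [self_mem_nhdsWithin] with δ (hδ : 0 < δ)
  filter_upwards [self_mem_nhdsWithin] with ε (hε : 0 < ε)
  exact crossEnergy_rescaled_le hDo hDc hφ hφ2 hw hk hε hδ

end Sobolev

theorem stmt15_general (ρ : ℝ → ℝ) (hρsymm : ∀ z, ρ (-z) = ρ z)
    (hρmono : ∀ ⦃z w : ℝ⦄, 0 < z → z ≤ w → ρ w ≤ ρ z)
    (hρ2 : Integrable (fun r => r ^ 2 * ρ r))
    (a b : EReal)
    (D : Set ℝ) (hD : D = {x : ℝ | a < (x : EReal) ∧ (x : EReal) < b})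
    (φ : ℝ → ℝ) (hφd : DifferentiableOn ℝ φ D)
    (hφ2 : MemLp φ 2 (volume.restrict D))
    (hφ'2 : MemLp (derivWithin φ D) 2 (volume.restrict D)) :
    Tendsto (fun ε : ℝ =>
        ε⁻¹ ^ 2 * ∫ x in D ∩ Iio 0, ∫ y in D ∩ Ioi 0,
          ε⁻¹ * ρ ((x - y) / ε) * (φ x - φ y) ^ 2)
      (nhdsWithin 0 (Ioi 0)) (nhds 0) := by
  have hρmeas : Measurable ρ :=
    measurable_of_even_of_antitoneOn hρsymm fun z hz _ _ hzw => hρmono hz hzw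
  have hDpre : D = Real.toEReal ⁻¹' Ioo a b := hD
  have hDo : IsOpen D := hDpre ▸ isOpen_Ioo.preimage continuous_coe_real_ereal
  have hDc : D.OrdConnected := hDpre ▸ ordConnected_Ioo.preimage_mono EReal.coe_strictMono.monotone
  have hM : ∫⁻ t, ENNReal.ofReal (t ^ 2) * ‖ρ t‖ₑ ≠ ∞ := by
    simpa only [enorm_mul, Real.enorm_of_nonneg (sq_nonneg _)] using hρ2.2.ne
  refine tendsto_zero_iff_enorm_tendsto_zero.2 (tendsto_of_tendsto_of_tendsto_of_le_of_le'
    tendsto_const_nhds (tendsto_crossEnergy_rescaled hDo hDc hφd hφ2 hφ'2 hρmeas.enorm hM)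
    (Eventually.of_forall fun _ => zero_le) ?_)
  filter_upwards [self_mem_nhdsWithin] with ε (hε : 0 < ε)
  exact enorm_rescaled_cross_le hρsymm φ _ _ hε

/-- the rescaled cross interaction of two adjacent intervals vanishes. -/
theorem stmt15 (ρ : ℝ → ℝ) (hρnn : ∀ z, 0 ≤ ρ z) (hρsymm : ∀ z, ρ (-z) = ρ z)
    (hρmono : ∀ ⦃z w : ℝ⦄, 0 < z → z ≤ w → ρ w ≤ ρ z)
    (hρint : Integrable ρ) (hρ2 : Integrable (fun r => r ^ 2 * ρ r))
    (a b : EReal) (ha : a < 0) (hb : 0 < b)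
    (D : Set ℝ) (hD : D = {x : ℝ | a < (x : EReal) ∧ (x : EReal) < b})
    (φ : ℝ → ℝ) (hφd : DifferentiableOn ℝ φ D)
    (hφ2 : MemLp φ 2 (volume.restrict D))
    (hφ'2 : MemLp (derivWithin φ D) 2 (volume.restrict D)) :
    Tendsto (fun ε : ℝ =>
        ε⁻¹ ^ 2 * ∫ x in D ∩ Iio 0, ∫ y in D ∩ Ioi 0,
          ε⁻¹ * ρ ((x - y) / ε) * (φ x - φ y) ^ 2)
      (nhdsWithin 0 (Ioi 0)) (nhds 0) :=
  stmt15_general ρ hρsymm hρmono hρ2 a b D hD φ hφd hφ2 hφ'2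
end
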